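/- arXiv:1605.03335 — 2 statements merged into one kernel-verified Lean document; each statement's English description precedes it below -/
import Mathlib

section
/- Let $\lambda_0, \lambda > 0$ and define for $z \in \mathbb{R}$ the function $Q(\beta) = \tfrac{1}{2}(z-\beta)^2 + \lambda_0|\beta| + p_{H,\lambda}(|\beta|)$ where $p_{H,\lambda}(t) = \tfrac{1}{2}\{\lambda^2 - (\lambda - t)_+^2\}$ for $t \ge 0$. Then the global minimizer of $Q$ over $\mathbb{R}$ is $\hat\beta(z) = \mathrm{sgn}(z)(|z| - \lambda_0) \mathbf{1}_{\{|z| > \lambda + \lambda_0\}}$. -/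
private lemma univ_aux (lam0 lam : ℝ) (hlam0 : 0 < lam0) (hlam : 0 < lam)
    (z : ℝ) (hz : 0 ≤ z) (b β : ℝ)
    (hb : b = Real.sign z * (|z| - lam0) * (if lam + lam0 < |z| then 1 else 0)) :
    (1 / 2) * (z - b) ^ 2 + lam0 * |b| + (1 / 2) * (lam ^ 2 - (max (lam - |b|) 0) ^ 2)
      ≤ (1 / 2) * (z - β) ^ 2 + lam0 * |β| +
        (1 / 2) * (lam ^ 2 - (max (lam - |β|) 0) ^ 2) := by
  rw [abs_of_nonneg hz] at hb
  by_cases hc : lam + lam0 < z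
  · have hzpos : 0 < z := by linarith
    rw [if_pos hc, Real.sign_of_pos hzpos] at hb
    have hb' : b = z - lam0 := by rw [hb]; ring
    have hbabs : |b| = z - lam0 := by rw [hb', abs_of_pos]; linarith
    have hmaxb : max (lam - |b|) 0 = 0 := by
      rw [hbabs]; exact max_eq_right (by linarith)
    rw [hmaxb, hbabs, hb']
    rcases le_or_gt (|β|) lam with hβ | hβ
    · have hmax : max (lam - |β|) 0 = lam - |β| := max_eq_left (by linarith)
      rw [hmax]
      nlinarith [sq_nonneg (z - lam - lam0),
        mul_nonneg (by linarith : (0:ℝ) ≤ z - lam0 - lam) (by linarith : (0:ℝ) ≤ lam - |β|),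
        mul_nonneg hz (sub_nonneg.2 (le_abs_self β)), sq_abs β]
    · have hmax : max (lam - |β|) 0 = 0 := max_eq_right (by linarith)
      rw [hmax]
      have h1 : z ≤ |z - β| + |β| := by
        calc z = (z - β) + β := by ring
        _ ≤ |z - β| + |β| := add_le_add (le_abs_self _) (le_abs_self _)
      nlinarith [sq_nonneg (|z - β| - lam0), sq_abs (z - β),
        mul_le_mul_of_nonneg_left h1 hlam0.le]
  · rw [if_neg hc, mul_zero] at hb
    have hbabs : |b| = 0 := by rw [hb, abs_zero]
    have hmaxb : max (lam - |b|) 0 = lam - 0 := by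
      rw [hbabs]; rw [sub_zero]; exact max_eq_left hlam.le
    rw [hmaxb, hbabs, hb]
    rcases le_or_gt (|β|) lam with hβ | hβ
    · have hmax : max (lam - |β|) 0 = lam - |β| := max_eq_left (by linarith)
      rw [hmax]
      nlinarith [mul_nonneg hz (sub_nonneg.2 (le_abs_self β)),
        mul_nonneg (by linarith : (0:ℝ) ≤ lam + lam0 - z) (abs_nonneg β), sq_abs β]
    · have hmax : max (lam - |β|) 0 = 0 := max_eq_right (by linarith)
      rw [hmax]
      nlinarith [sq_nonneg (|β| - lam), mul_nonneg hz (sub_nonneg.2 (le_abs_self β)),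
        mul_nonneg (by linarith : (0:ℝ) ≤ lam + lam0 - z) (abs_nonneg β), sq_abs β,
        mul_nonneg hlam0.le (abs_nonneg β)]

/-- Combined soft/hard-thresholding: the global minimizer of the univariate
penalized least squares with `L₁` plus hard-thresholding penalty. -/
theorem univariate_global_minimizer
    (lam0 lam : ℝ) (hlam0 : 0 < lam0) (hlam : 0 < lam) (z : ℝ)
    (pH : ℝ → ℝ) (hpH : ∀ t : ℝ, pH t = (1 / 2) * (lam ^ 2 - (max (lam - t) 0) ^ 2))
    (Q : ℝ → ℝ)
    (hQ : ∀ β : ℝ, Q β = (1 / 2) * (z - β) ^ 2 + lam0 * |β| + pH |β|)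
    (βhat : ℝ)
    (hβhat : βhat = Real.sign z * (|z| - lam0) * (if lam + lam0 < |z| then 1 else 0)) :
    ∀ β : ℝ, Q βhat ≤ Q β := by
  intro β
  rw [hQ, hQ, hpH, hpH]
  rcases le_or_gt 0 z with hz | hz
  · exact univ_aux lam0 lam hlam0 hlam z hz βhat β hβhat
  · have hb' : -βhat = Real.sign (-z) * (|-z| - lam0) *
        (if lam + lam0 < |-z| then 1 else 0) := by
      rw [abs_neg, Real.sign_neg, hβhat]; ring
    have h := univ_aux lam0 lam hlam0 hlam (-z) (by linarith) (-βhat) (-β) hb'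
    simp only [abs_neg] at h
    have e1 : (-z - -βhat) ^ 2 = (z - βhat) ^ 2 := by ring
    have e2 : (-z - -β) ^ 2 = (z - β) ^ 2 := by ring
    rw [e1, e2] at h
    exact h
end

section
/- Suppose $|z| \le \lambda + \lambda_0$ with $\lambda, \lambda_0 > 0$, and suppose $p_\lambda : [0,\infty) \to \mathbb{R}$ is increasing with $p_\lambda(t) \ge p_{H,\lambda}(t)$ for $t \in [0,\lambda]$ and $p_\lambda(t) \ge \lambda^2/2$ for $t \ge \lambda$, and $p_\lambda(0) = 0$. Then $\beta = 0$ is a global minimizer of $Q(\beta) = \tfrac{1}{2}(z-\beta)^2 + \lambda_0|\beta| + p_\lambda(|\beta|)$ over $\mathbb{R}$. -/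
open Set

/-- Case 1 of the proof of Proposition 1: if `|z| ≤ λ + λ₀` and the penalty
`p_λ` dominates the hard-thresholding penalty, then `β = 0` is a global
minimizer of the univariate combined penalized least-squares objective. -/
theorem zero_is_global_minimizer
    (lam0 lam z : ℝ) (hlam0 : 0 < lam0) (hlam : 0 < lam) (hz : |z| ≤ lam + lam0)
    (p : ℝ → ℝ) (hmono : MonotoneOn p (Ici 0))
    (hdom : ∀ t ∈ Icc (0 : ℝ) lam, (1 / 2) * (lam ^ 2 - (max (lam - t) 0) ^ 2) ≤ p t)
    (htail : ∀ t : ℝ, lam ≤ t → lam ^ 2 / 2 ≤ p t)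
    (hzero : p 0 = 0)
    (Q : ℝ → ℝ)
    (hQ : ∀ β : ℝ, Q β = (1 / 2) * (z - β) ^ 2 + lam0 * |β| + p |β|) :
    ∀ β : ℝ, Q 0 ≤ Q β := by
  intro β
  rw [hQ, hQ]
  simp only [abs_zero, hzero, sub_zero, mul_zero, add_zero]
  set t := |β| with ht
  have ht0 : 0 ≤ t := abs_nonneg β
  have key : lam * t - t ^ 2 / 2 ≤ p t := by
    rcases le_or_gt t lam with h | h
    · have := hdom t ⟨ht0, h⟩
      rw [max_eq_left (by linarith)] at this
      nlinarith
    · have := htail t h.le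
      nlinarith [sq_nonneg (lam - t)]
  have hzb : z * β ≤ |z| * t := (le_abs_self _).trans (abs_mul z β).le
  have hb2 : β ^ 2 = t ^ 2 := (sq_abs β).symm
  have hzt : |z| * t ≤ (lam + lam0) * t := mul_le_mul_of_nonneg_right hz ht0
  nlinarith
end
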